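/- Consider the planar ODE system a₁' = 2a₄(8 − a₁²) − (4 − 3a₁²)(1 − ¼a₁²), a₄' = a₁a₄((3/2)a₁² − 6 − 8a₄), and define the region R₁ = {(a₁, a₄) ∈ ℝ² : a₁ > 2, a₄ > (3/16)(a₁² − 4), and in addition a₄ < (3a₁² − 4)(a₁² − 4)/(8(8 − a₁²)) in case a₁ < √8}. Then every solution with initial value in R₁ is defined for all forward times, remains in the closure of R₁ for all t ≥ 0, and converges to the equilibrium (2, 0) as t → +∞. -/

import Mathlib

/-!
Writing `R₁ = {a₁ > 2, a₄ > 3/16 (a₁² - 4), a₁' < 0}`, the middle condition gives `a₄' < 0`, so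
both coordinates decrease inside `R₁`. A solution cannot leave `R₁`: at a first exit time it would
lie on a boundary piece, and each piece is crossed inward. On `a₁ = 2` one has `a₁' = 8 a₄ > 0`; on
the lower curve `a₄' = 0`, so `(a₄ - 3/16 (a₁² - 4))' = -3/8 a₁ a₁' > 0`; on the upper curve
`a₁' = 0`, so `a₁'' = 2 (8 - a₁²) a₄' < 0`. And `a₄` cannot reach `0` in finite time, since `a₄'/a₄`
is bounded on compact time intervals. The trapped solution is monotone and bounded, hence
converges, and its limit is an equilibrium in the closure of `R₁`, which can only be `(2, 0)`.

For existence, clamping the field to a box around the initial point makes it globally Lipschitz,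
so Picard–Lindelöf gives a solution for all times; being trapped in the box, it solves the
original system.
-/

open Filter

/-- The trapping region `R₁` for the planar Whitham ODE system. -/
def regionR₁ : Set (ℝ × ℝ) :=
  {p | 2 < p.1 ∧ (3/16) * (p.1 ^ 2 - 4) < p.2 ∧
    (p.1 < Real.sqrt 8 →
      p.2 < (3 * p.1 ^ 2 - 4) * (p.1 ^ 2 - 4) / (8 * (8 - p.1 ^ 2)))}

open Set Topology

theorem HasDerivAt.fst {𝕜 E F : Type*} [NontriviallyNormedField 𝕜] [NormedAddCommGroup E]
    [NormedSpace 𝕜 E] [NormedAddCommGroup F] [NormedSpace 𝕜 F] {f : 𝕜 → E × F} {f' : E × F}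
    {t : 𝕜} (h : HasDerivAt f f' t) : HasDerivAt (fun s => (f s).1) f'.1 t :=
  (ContinuousLinearMap.fst 𝕜 E F).hasFDerivAt.comp_hasDerivAt t h

theorem HasDerivAt.snd {𝕜 E F : Type*} [NontriviallyNormedField 𝕜] [NormedAddCommGroup E]
    [NormedSpace 𝕜 E] [NormedAddCommGroup F] [NormedSpace 𝕜 F] {f : 𝕜 → E × F} {f' : E × F}
    {t : 𝕜} (h : HasDerivAt f f' t) : HasDerivAt (fun s => (f s).2) f'.2 t :=
  (ContinuousLinearMap.snd 𝕜 E F).hasFDerivAt.comp_hasDerivAt t h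

theorem HasDerivAt.pos_of_eventually_pos_left {f : ℝ → ℝ} {f' c : ℝ} (hf : HasDerivAt f f' c)
    (hleft : ∀ᶠ t in 𝓝[<] c, 0 < f t) (hc : 0 ≤ f c) (hderiv : f c = 0 → 0 < f') : 0 < f c := by
  refine hc.lt_of_ne fun hzero => (hderiv hzero.symm).not_ge ?_
  have hslope := hf.hasDerivWithinAt (s := Iio c)
  rw [hasDerivWithinAt_iff_tendsto_slope, sdiff_singleton_eq_self self_notMem_Iio] at hslope
  refine le_of_tendsto hslope ?_
  filter_upwards [hleft, self_mem_nhdsWithin] with t hft (htc : t < c)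
  rw [slope_def_field, ← hzero, sub_zero]
  exact div_nonpos_of_nonneg_of_nonpos hft.le (sub_nonpos.mpr htc.le)

theorem eqOn_zero_of_hasDerivAt_mul {y k : ℝ → ℝ} {a b : ℝ} (hk : ContinuousOn k (Icc a b))
    (hy : ∀ t ∈ Icc a b, HasDerivAt y (k t * y t) t) (hb : y b = 0) : EqOn y 0 (Icc a b) := by
  obtain ⟨K, hK⟩ := isCompact_Icc.exists_bound_of_continuousOn hk
  have hlip : ∀ t ∈ Ioc a b, LipschitzOnWith K.toNNReal (fun z => k t * z) univ := fun t ht =>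
    ((lipschitzWith_smul (k t)).weaken (by
      rw [← NNReal.coe_le_coe, coe_nnnorm]
      exact (hK t (Ioc_subset_Icc_self ht)).trans (Real.le_coe_toNNReal K))).lipschitzOnWith
  exact ODE_solution_unique_of_mem_Icc_left (s := fun _ => univ) hlip
    (HasDerivAt.continuousOn hy) (fun t ht => (hy t (Ioc_subset_Icc_self ht)).hasDerivWithinAt)
    (fun _ _ => trivial) continuousOn_const
    (fun t _ => by simpa [Pi.zero_def] using hasDerivWithinAt_const t (Iic t) (0 : ℝ))
    (fun _ _ => trivial) hb

theorem IsOpen.forall_mem_of_no_first_exit {X : Type*} [TopologicalSpace X] {γ : ℝ → X} {U : Set X}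
    (hU : IsOpen U) (hγ : ContinuousOn γ (Ici 0)) (h0 : γ 0 ∈ U)
    (hexit : ∀ c > 0, (∀ t ∈ Ico 0 c, γ t ∈ U) → γ c ∈ closure U → γ c ∈ U) :
    ∀ t, 0 ≤ t → γ t ∈ U := by
  by_contra! hout
  set S := Ici (0 : ℝ) ∩ γ ⁻¹' Uᶜ
  have hS : S.Nonempty := let ⟨t, ht, htU⟩ := hout; ⟨t, ht, htU⟩
  have hbdd : BddBelow S := ⟨0, fun t ht => ht.1⟩
  have hcS : sInf S ∈ S :=
    (hγ.preimage_isClosed_of_isClosed isClosed_Ici hU.isClosed_compl).csInf_mem hS hbdd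
  have hbefore : ∀ t ∈ Ico 0 (sInf S), γ t ∈ U := fun t ht => by
    by_contra htU
    exact (csInf_le hbdd ⟨ht.1, htU⟩).not_gt ht.2
  have hpos : 0 < sInf S := hcS.1.lt_of_ne fun h => hcS.2 (h ▸ h0)
  refine hcS.2 (hexit _ hpos hbefore ?_)
  have hcont : ContinuousWithinAt γ (Ico 0 (sInf S)) (sInf S) :=
    (hγ _ hcS.1).mono fun t ht => ht.1
  exact hcont.mem_closure (by rw [closure_Ico hpos.ne]; exact right_mem_Icc.mpr hpos.le) hbefore

theorem eq_zero_of_hasDerivAt_of_tendsto {f g : ℝ → ℝ} {L c : ℝ}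
    (hf : ∀ t, 0 ≤ t → HasDerivAt f (g t) t) (hfL : Tendsto f atTop (𝓝 L))
    (hgc : Tendsto g atTop (𝓝 c)) : c = 0 := by
  have hmvt : ∀ t, ∃ ξ, (0 ≤ t → t < ξ ∧ g ξ = f (t + 1) - f t) := fun t => by
    by_cases ht : 0 ≤ t
    · obtain ⟨ξ, hξ, hslope⟩ := exists_hasDerivAt_eq_slope f g (lt_add_one t)
        (fun s hs => (hf s (ht.trans hs.1)).continuousAt.continuousWithinAt)
        (fun s hs => hf s (ht.trans hs.1.le))
      exact ⟨ξ, fun _ => ⟨hξ.1, by rw [hslope, add_sub_cancel_left, div_one]⟩⟩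
    · exact ⟨0, fun h => absurd h ht⟩
  choose ξ hξ using hmvt
  have hξtop : Tendsto ξ atTop atTop :=
    tendsto_atTop_mono' _ (eventually_ge_atTop 0 |>.mono fun t ht => (hξ t ht).1.le) tendsto_id
  have hdiff : Tendsto (fun t => f (t + 1) - f t) atTop (𝓝 (L - L)) :=
    (hfL.comp (tendsto_atTop_add_const_right _ 1 tendsto_id)).sub hfL
  rw [sub_self] at hdiff
  refine tendsto_nhds_unique ((hgc.comp hξtop).congr' ?_) hdiff
  filter_upwards [eventually_ge_atTop 0] with t ht using (hξ t ht).2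

theorem AntitoneOn.exists_tendsto_atTop {f : ℝ → ℝ} {a m : ℝ} (hf : AntitoneOn f (Ici a))
    (hm : ∀ t, a ≤ t → m ≤ f t) : ∃ L, m ≤ L ∧ Tendsto f atTop (𝓝 L) := by
  have hanti : Antitone fun t => f (max t a) := fun s t hst =>
    hf (le_max_right s a) (le_max_right t a) (max_le_max_right a hst)
  have hbdd : BddBelow (range fun t => f (max t a)) := ⟨m, by
    rintro _ ⟨t, rfl⟩
    exact hm _ (le_max_right t a)⟩
  have hlim := tendsto_atTop_ciInf hanti hbdd
  have hlim' : Tendsto f atTop (𝓝 (⨅ t, f (max t a))) := hlim.congr' <| by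
    filter_upwards [eventually_ge_atTop a] with t ht using by rw [max_eq_left ht]
  refine ⟨_, ge_of_tendsto hlim' ?_, hlim'⟩
  filter_upwards [eventually_ge_atTop a] with t ht using hm t ht

def projBox (a b : ℝ × ℝ) (p : ℝ × ℝ) : ℝ × ℝ := (max a.1 (min b.1 p.1), max a.2 (min b.2 p.2))

theorem lipschitzWith_projBox (a b : ℝ × ℝ) : LipschitzWith 1 (projBox a b) := by
  have h := ((LipschitzWith.prod_fst.const_min b.1).const_max a.1).prodMk
    ((LipschitzWith.prod_snd.const_min b.2).const_max a.2)
  rwa [max_self] at h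

theorem projBox_mem {a b : ℝ × ℝ} (hab : a ≤ b) (p : ℝ × ℝ) : projBox a b p ∈ Icc a b :=
  ⟨⟨le_max_left _ _, le_max_left _ _⟩,
    ⟨max_le hab.1 (min_le_left _ _), max_le hab.2 (min_le_left _ _)⟩⟩

theorem projBox_eq_self {a b p : ℝ × ℝ} (hp : p ∈ Icc a b) : projBox a b p = p := by
  obtain ⟨⟨h₁, h₂⟩, h₃, h₄⟩ := hp
  simp [projBox, h₁, h₂, h₃, h₄]

theorem exists_forall_hasDerivAt_of_lipschitzWith {E : Type*} [NormedAddCommGroup E]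
    [NormedSpace ℝ E] [CompleteSpace E] {W : E → E} {K C : NNReal} (hW : LipschitzWith K W)
    (hC : ∀ x, ‖W x‖ ≤ C) (x₀ : E) : ∃ γ : ℝ → E, γ 0 = x₀ ∧ ∀ t, HasDerivAt γ (W (γ t)) t := by
  have hlocal : ∀ n : ℕ, ∃ α : ℝ → E, α 0 = x₀ ∧
      ∀ t ∈ Ioo (-(n + 1 : ℝ)) (n + 1), HasDerivAt α (W (α t)) t := by
    intro n
    have hn : (0 : ℝ) ≤ n + 1 := by positivity
    have hpl : IsPicardLindelof (fun _ => W) (tmin := -(n + 1 : ℝ)) (tmax := n + 1)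
        ⟨0, by constructor <;> linarith⟩ x₀ (C * (n + 1)) 0 C K :=
      .of_time_independent (fun x _ => hC x) hW.lipschitzOnWith (by
        simp only [sub_zero, zero_sub, neg_neg, max_self, NNReal.coe_zero, NNReal.coe_mul,
          NNReal.coe_add, NNReal.coe_natCast, NNReal.coe_one, le_refl])
    obtain ⟨α, hα0, hα⟩ := hpl.exists_eq_forall_mem_Icc_hasDerivWithinAt₀
    exact ⟨α, hα0, fun t ht => (hα t (Ioo_subset_Icc_self ht)).hasDerivAt (Icc_mem_nhds ht.1 ht.2)⟩
  choose α hα0 hα using hlocal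
  have hagree : ∀ m n : ℕ, m ≤ n → EqOn (α m) (α n) (Ioo (-(m + 1 : ℝ)) (m + 1)) := by
    intro m n hmn
    have hsub : Ioo (-(m + 1 : ℝ)) (m + 1) ⊆ Ioo (-(n + 1 : ℝ)) (n + 1) :=
      Ioo_subset_Ioo (by gcongr) (by gcongr)
    exact ODE_solution_unique_of_mem_Ioo (v := fun _ => W) (s := fun _ => univ)
      (fun _ _ => hW.lipschitzOnWith) ⟨by linarith, by positivity⟩
      (fun t ht => ⟨hα m t ht, trivial⟩) (fun t ht => ⟨hα n t (hsub ht), trivial⟩)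
      ((hα0 m).trans (hα0 n).symm)
  refine ⟨fun t => α ⌈|t|⌉₊ t, by simp [hα0], fun t => ?_⟩
  set N := ⌈|t|⌉₊ + 1
  have heq : ∀ s ∈ Ioo (-(N : ℝ)) N, α ⌈|s|⌉₊ s = α N s := fun s hs => by
    have hs' : |s| < ⌈|s|⌉₊ + 1 := (Nat.le_ceil |s|).trans_lt (lt_add_one _)
    refine hagree _ _ (Nat.ceil_le.mpr (abs_lt.mpr hs).le) (abs_lt.mp hs')
  have hnhds : Ioo (-(N : ℝ)) N ∈ 𝓝 t := by
    have ht : |t| < N := by simpa [N] using (Nat.le_ceil |t|).trans_lt (lt_add_one _)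
    exact Ioo_mem_nhds (abs_lt.mp ht).1 (abs_lt.mp ht).2
  show HasDerivAt _ (W (α ⌈|t|⌉₊ t)) t
  rw [heq t (mem_of_mem_nhds hnhds)]
  have htN : t ∈ Ioo (-(N + 1 : ℝ)) (N + 1) :=
    Ioo_subset_Ioo (by linarith) (by linarith) (mem_of_mem_nhds hnhds)
  exact (hα N t htN).congr_of_eventuallyEq (eventuallyEq_of_mem hnhds heq)

theorem exists_forall_hasDerivAt_comp_projBox {V : ℝ × ℝ → ℝ × ℝ} (hV : LocallyLipschitz V)
    {a b : ℝ × ℝ} (hab : a ≤ b) (p₀ : ℝ × ℝ) :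
    ∃ γ : ℝ → ℝ × ℝ, γ 0 = p₀ ∧ ∀ t, HasDerivAt γ (V (projBox a b (γ t))) t := by
  obtain ⟨K, hK⟩ := (hV.locallyLipschitzOn (s := Icc a b)).exists_lipschitzOnWith_of_compact
    isCompact_Icc
  obtain ⟨C, hC⟩ :=
    isCompact_Icc.exists_bound_of_continuousOn (hV.continuous.continuousOn (s := Icc a b))
  have hlip : LipschitzWith (K * 1) (V ∘ projBox a b) := by
    rw [← lipschitzOnWith_univ]
    exact hK.comp (lipschitzWith_projBox a b).lipschitzOnWith fun p _ => projBox_mem hab p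
  exact exists_forall_hasDerivAt_of_lipschitzWith hlip
    (C := C.toNNReal) (fun p => (hC _ (projBox_mem hab p)).trans (Real.le_coe_toNNReal C)) p₀

namespace Whitham

noncomputable def F₁ (x y : ℝ) : ℝ := 2 * y * (8 - x ^ 2) - (4 - 3 * x ^ 2) * (1 - 1/4 * x ^ 2)

noncomputable def F₄ (x y : ℝ) : ℝ := x * y * (3/2 * x ^ 2 - 6 - 8 * y)

noncomputable def field (p : ℝ × ℝ) : ℝ × ℝ := (F₁ p.1 p.2, F₄ p.1 p.2)

-- `F₁ < 0` is automatic when `a₁ ≥ √8`, and is the upper bound in `regionR₁` when `a₁ < √8`.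
def region : Set (ℝ × ℝ) := {p | 2 < p.1 ∧ 3/16 * (p.1 ^ 2 - 4) < p.2 ∧ F₁ p.1 p.2 < 0}

theorem F₁_eq_div (x y : ℝ) :
    F₁ x y = (y * (8 * (8 - x ^ 2)) - (3 * x ^ 2 - 4) * (x ^ 2 - 4)) / 4 := by
  unfold F₁; ring

theorem F₁_neg_iff {x y : ℝ} :
    F₁ x y < 0 ↔ y * (8 * (8 - x ^ 2)) < (3 * x ^ 2 - 4) * (x ^ 2 - 4) := by
  rw [F₁_eq_div]; constructor <;> intro h <;> linarith

theorem regionR₁_eq_region : regionR₁ = region := by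
  ext ⟨x, y⟩
  simp only [regionR₁, region, mem_ofPred_eq, F₁_neg_iff]
  refine and_congr_right fun hx => and_congr_right fun hy => ?_
  have hy0 : 0 < y := by nlinarith
  rw [Real.lt_sqrt (by linarith)]
  constructor
  · intro h
    rcases lt_or_ge (x ^ 2) 8 with hx8 | hx8
    · exact (lt_div_iff₀ (by linarith)).mp (h hx8)
    · nlinarith
  · intro h hx8
    exact (lt_div_iff₀ (by linarith)).mpr h

theorem continuous_F₁ : Continuous fun p : ℝ × ℝ => F₁ p.1 p.2 := by
  unfold F₁; fun_prop

theorem continuous_F₄ : Continuous fun p : ℝ × ℝ => F₄ p.1 p.2 := by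
  unfold F₄; fun_prop

theorem contDiff_field : ContDiff ℝ 1 field := by
  unfold field F₁ F₄; fun_prop

theorem isOpen_region : IsOpen region :=
  (isOpen_lt continuous_const continuous_fst).inter <|
    (isOpen_lt (by fun_prop) continuous_snd).inter (isOpen_lt continuous_F₁ continuous_const)

theorem closure_region_subset :
    closure region ⊆ {p | 2 ≤ p.1 ∧ 3/16 * (p.1 ^ 2 - 4) ≤ p.2 ∧ F₁ p.1 p.2 ≤ 0} :=
  closure_minimal (fun _ ⟨h₁, h₂, h₃⟩ => ⟨h₁.le, h₂.le, h₃.le⟩) <|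
    (isClosed_le continuous_const continuous_fst).inter <|
      (isClosed_le (by fun_prop) continuous_snd).inter (isClosed_le continuous_F₁ continuous_const)

theorem snd_pos_of_mem_region {p : ℝ × ℝ} (hp : p ∈ region) : 0 < p.2 := by
  obtain ⟨h₁, h₂, -⟩ := hp
  nlinarith

theorem F₄_neg_of_mem_region {p : ℝ × ℝ} (hp : p ∈ region) : F₄ p.1 p.2 < 0 := by
  have hy := snd_pos_of_mem_region hp
  obtain ⟨h₁, h₂, -⟩ := hp
  have : F₄ p.1 p.2 = -(8 * p.1 * p.2) * (p.2 - 3/16 * (p.1 ^ 2 - 4)) := by unfold F₄; ring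
  rw [this]
  exact mul_neg_of_neg_of_pos (by nlinarith) (by linarith)

theorem F₁_two_pos {y : ℝ} (hy : 0 < y) : 0 < F₁ 2 y := by
  unfold F₁; linarith

theorem F₄_sub_mul_F₁_pos {x y : ℝ} (hx : 2 < x) (hy : y = 3/16 * (x ^ 2 - 4)) :
    0 < F₄ x y - 3/8 * x * F₁ x y := by
  subst hy
  have : F₄ x (3/16 * (x ^ 2 - 4)) - 3/8 * x * F₁ x (3/16 * (x ^ 2 - 4)) =
      3/64 * x * (x ^ 2 - 4) * (9 * x ^ 2 - 32) := by unfold F₄ F₁; ring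
  rw [this]
  have hx4 : 0 < x ^ 2 - 4 := by nlinarith
  have hx32 : 0 < 9 * x ^ 2 - 32 := by nlinarith
  positivity

theorem F₄_mul_neg_of_F₁_eq_zero {x y : ℝ} (hx : 2 < x) (hy : 3/16 * (x ^ 2 - 4) < y)
    (hF : F₁ x y = 0) : F₄ x y * (8 - x ^ 2) < 0 := by
  have hx4 : 0 < x ^ 2 - 4 := by nlinarith
  have hy0 : 0 < y := by linarith [mul_pos (by norm_num : (0:ℝ) < 3/16) hx4]
  have hx8 : 0 < 8 - x ^ 2 := by
    rw [F₁_eq_div] at hF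
    by_contra! h
    nlinarith [mul_nonpos_of_nonneg_of_nonpos hy0.le h,
      mul_pos (by linarith : 0 < 3 * x ^ 2 - 4) hx4]
  have : F₄ x y = -(8 * x * y) * (y - 3/16 * (x ^ 2 - 4)) := by unfold F₄; ring
  rw [this]
  exact mul_neg_of_neg_of_pos (mul_neg_of_neg_of_pos (by nlinarith) (by linarith)) hx8

theorem hasDerivAt_F₁_comp {x y : ℝ → ℝ} {x' y' t : ℝ} (hx : HasDerivAt x x' t)
    (hy : HasDerivAt y y' t) :
    HasDerivAt (fun s => F₁ (x s) (y s))
      (2 * (8 - x t ^ 2) * y' + x t * (8 - 3 * x t ^ 2 - 4 * y t) * x') t := by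
  refine (((hy.const_mul 2).mul ((hx.fun_pow 2).const_sub 8)).sub
    ((((hx.fun_pow 2).const_mul 3).const_sub 4).mul
      (((hx.fun_pow 2).const_mul (1/4)).const_sub 1))).congr_deriv ?_
  norm_num
  ring

theorem eq_two_zero_of_F₁_F₄_eq_zero {x y : ℝ} (hx : 2 ≤ x) (hy : 0 ≤ y) (h₁ : F₁ x y = 0)
    (h₄ : F₄ x y = 0) :
    x = 2 ∧ y = 0 := by
  unfold F₄ at h₄
  rcases mul_eq_zero.mp h₄ with h | h
  · obtain rfl : y = 0 := (mul_eq_zero.mp h).resolve_left (by linarith)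
    unfold F₁ at h₁
    have h : (4 - 3 * x ^ 2) * (1 - 1/4 * x ^ 2) = 0 := by linarith
    refine ⟨?_, rfl⟩
    rcases mul_eq_zero.mp h with h | h <;> nlinarith
  · have hy : y = 3/16 * (x ^ 2 - 4) := by linarith
    subst hy
    unfold F₁ at h₁
    constructor <;> nlinarith

theorem antitoneOn_of_forall_mem_region {γ : ℝ → ℝ × ℝ} {s : Set ℝ} (hs : Convex ℝ s)
    (hγ : ∀ t ∈ s, HasDerivAt γ (field (γ t)) t) (hmem : ∀ t ∈ interior s, γ t ∈ region) :
    AntitoneOn γ s := by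
  have h₁ : AntitoneOn (fun t => (γ t).1) s :=
    antitoneOn_of_hasDerivWithinAt_nonpos hs
      (fun t ht => (hγ t ht).fst.continuousAt.continuousWithinAt)
      (fun t ht => (hγ t (interior_subset ht)).fst.hasDerivWithinAt) fun t ht => (hmem t ht).2.2.le
  have h₂ : AntitoneOn (fun t => (γ t).2) s :=
    antitoneOn_of_hasDerivWithinAt_nonpos hs
      (fun t ht => (hγ t ht).snd.continuousAt.continuousWithinAt)
      (fun t ht => (hγ t (interior_subset ht)).snd.hasDerivWithinAt)
      fun t ht => (F₄_neg_of_mem_region (hmem t ht)).le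
  exact fun a ha b hb hab => ⟨h₁ ha hb hab, h₂ ha hb hab⟩

theorem mem_region_of_forall_Ico {γ : ℝ → ℝ × ℝ} {c : ℝ} (hc : 0 < c)
    (hγ : ∀ t ∈ Icc 0 c, HasDerivAt γ (field (γ t)) t)
    (hbefore : ∀ t ∈ Ico 0 c, γ t ∈ region) (hclosure : γ c ∈ closure region) :
    γ c ∈ region := by
  obtain ⟨hx₀, hy₀, hF₀⟩ := closure_region_subset hclosure
  have hleft : ∀ᶠ t in 𝓝[<] c, γ t ∈ region := by
    filter_upwards [Ioo_mem_nhdsLT hc] with t ht using hbefore t (Ioo_subset_Ico_self ht)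
  have hx := (hγ c (right_mem_Icc.mpr hc.le)).fst
  have hy := (hγ c (right_mem_Icc.mpr hc.le)).snd
  -- `a₄' = k a₄` with `k` continuous, so `a₄` cannot vanish at time `c`.
  have hy_pos : 0 < (γ c).2 := by
    have hγc : ContinuousOn γ (Icc 0 c) := HasDerivAt.continuousOn hγ
    refine lt_of_le_of_ne (by nlinarith) fun h => ?_
    have hzero := eqOn_zero_of_hasDerivAt_mul
      (k := fun t => (γ t).1 * (3/2 * (γ t).1 ^ 2 - 6 - 8 * (γ t).2)) (by fun_prop)
      (fun t ht => (hγ t ht).snd.congr_deriv (by simp only [field, F₄]; ring)) h.symm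
      (left_mem_Icc.mpr hc.le)
    exact (snd_pos_of_mem_region (hbefore 0 ⟨le_rfl, hc⟩)).ne' hzero
  have h₁ : 2 < (γ c).1 := by
    have hB : HasDerivAt (fun t => (γ t).1 - 2) (F₁ (γ c).1 (γ c).2) c := hx.sub_const 2
    have := hB.pos_of_eventually_pos_left (hleft.mono fun t ht => sub_pos.mpr ht.1)
      (sub_nonneg.mpr hx₀) fun h => by
        rw [show (γ c).1 = 2 by linarith]
        exact F₁_two_pos hy_pos
    linarith
  have h₂ : 3/16 * ((γ c).1 ^ 2 - 4) < (γ c).2 := by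
    have hB : HasDerivAt (fun t => (γ t).2 - 3/16 * ((γ t).1 ^ 2 - 4))
        (F₄ (γ c).1 (γ c).2 - 3/8 * (γ c).1 * F₁ (γ c).1 (γ c).2) c :=
      (hy.sub (((hx.fun_pow 2).sub_const 4).const_mul (3/16))).congr_deriv (by simp [field]; ring)
    have := hB.pos_of_eventually_pos_left (hleft.mono fun t ht => sub_pos.mpr ht.2.1)
      (sub_nonneg.mpr hy₀) fun h => F₄_sub_mul_F₁_pos h₁ (by linarith)
    linarith
  have h₃ : F₁ (γ c).1 (γ c).2 < 0 := by
    have hB : HasDerivAt (fun t => -F₁ (γ t).1 (γ t).2)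
        (-(2 * (8 - (γ c).1 ^ 2) * F₄ (γ c).1 (γ c).2
          + (γ c).1 * (8 - 3 * (γ c).1 ^ 2 - 4 * (γ c).2) * F₁ (γ c).1 (γ c).2)) c :=
      (hasDerivAt_F₁_comp hx hy).neg
    have := hB.pos_of_eventually_pos_left (hleft.mono fun t ht => neg_pos.mpr ht.2.2)
      (neg_nonneg.mpr hF₀) fun h => by
        have hF : F₁ (γ c).1 (γ c).2 = 0 := neg_eq_zero.mp h
        rw [hF]
        nlinarith [F₄_mul_neg_of_F₁_eq_zero h₁ h₂ hF]
    linarith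
  exact ⟨h₁, h₂, h₃⟩

/-- `W` only has to agree with `field` on a box, so that this applies to a globally Lipschitz
modification of `field`. -/
theorem forall_mem_region_of_eqOn {γ : ℝ → ℝ × ℝ} {W : ℝ × ℝ → ℝ × ℝ} {b : ℝ × ℝ}
    (hW : EqOn W field (Icc (2, 0) b)) (hγ : ∀ t, 0 ≤ t → HasDerivAt γ (W (γ t)) t)
    (h0 : γ 0 ∈ region) (hb₁ : (γ 0).1 < b.1) (hb₂ : (γ 0).2 < b.2) :
    ∀ t, 0 ≤ t → γ t ∈ region ∩ Icc (2, 0) b := by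
  set U := region ∩ {p | p.1 < b.1 ∧ p.2 < b.2}
  have hU : IsOpen U := isOpen_region.inter <|
    (isOpen_lt continuous_fst continuous_const).inter (isOpen_lt continuous_snd continuous_const)
  have hUbox : closure U ⊆ Icc (2, 0) b :=
    closure_minimal (fun p ⟨hp, h₁, h₂⟩ => ⟨⟨hp.1.le, (snd_pos_of_mem_region hp).le⟩, h₁.le, h₂.le⟩)
      isClosed_Icc
  have hmem := hU.forall_mem_of_no_first_exit
    (fun t ht => (hγ t ht).continuousAt.continuousWithinAt) ⟨h0, hb₁, hb₂⟩
    fun c hc hbefore hclosure => by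
      have hγ' : ∀ t ∈ Icc 0 c, HasDerivAt γ (field (γ t)) t := fun t ht => by
        have htU : γ t ∈ closure U := by
          rcases ht.2.lt_or_eq with htc | rfl
          · exact subset_closure (hbefore t ⟨ht.1, htc⟩)
          · exact hclosure
        rw [← hW (hUbox htU)]
        exact hγ t ht.1
      have hreg := mem_region_of_forall_Ico hc hγ' (fun t ht => (hbefore t ht).1)
        (closure_mono inter_subset_left hclosure)
      have hle : γ c ≤ γ 0 :=
        antitoneOn_of_forall_mem_region (convex_Icc 0 c) hγ'
          (by rw [interior_Icc]; exact fun t ht => (hbefore t (Ioo_subset_Ico_self ht)).1)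
          (left_mem_Icc.mpr hc.le) (right_mem_Icc.mpr hc.le) hc.le
      exact ⟨hreg, hle.1.trans_lt hb₁, hle.2.trans_lt hb₂⟩
  exact fun t ht => ⟨(hmem t ht).1, hUbox (subset_closure (hmem t ht))⟩

theorem forall_mem_region {γ : ℝ → ℝ × ℝ} (hγ : ∀ t, 0 ≤ t → HasDerivAt γ (field (γ t)) t)
    (h0 : γ 0 ∈ region) : ∀ t, 0 ≤ t → γ t ∈ region := fun t ht =>
  (forall_mem_region_of_eqOn (b := γ 0 + (1, 1)) (eqOn_refl field _) hγ h0 (by simp) (by simp)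
    t ht).1

theorem exists_forall_hasDerivAt_field {p₀ : ℝ × ℝ} (hp₀ : p₀ ∈ region) :
    ∃ γ : ℝ → ℝ × ℝ, γ 0 = p₀ ∧ ∀ t, 0 ≤ t → HasDerivAt γ (field (γ t)) t := by
  set b := p₀ + (1, 1)
  have hb₁ : p₀.1 < b.1 := by simp [b]
  have hb₂ : p₀.2 < b.2 := by simp [b]
  have hab : ((2 : ℝ), (0 : ℝ)) ≤ b :=
    ⟨by linarith [hp₀.1], by linarith [snd_pos_of_mem_region hp₀]⟩
  obtain ⟨γ, hγ0, hγ⟩ :=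
    exists_forall_hasDerivAt_comp_projBox contDiff_field.locallyLipschitz hab p₀
  have hW : EqOn (field ∘ projBox (2, 0) b) field (Icc (2, 0) b) := fun p hp => by
    simp [projBox_eq_self hp]
  have hmem := forall_mem_region_of_eqOn hW (fun t _ => hγ t) (hγ0 ▸ hp₀) (hγ0 ▸ hb₁) (hγ0 ▸ hb₂)
  exact ⟨γ, hγ0, fun t ht => hW (hmem t ht).2 ▸ hγ t⟩

theorem tendsto_two_zero {γ : ℝ → ℝ × ℝ} (hγ : ∀ t, 0 ≤ t → HasDerivAt γ (field (γ t)) t)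
    (hmem : ∀ t, 0 ≤ t → γ t ∈ region) : Tendsto γ atTop (𝓝 (2, 0)) := by
  have hanti := antitoneOn_of_forall_mem_region (convex_Ici 0) hγ
    (by rw [interior_Ici]; exact fun t ht => hmem t ht.le)
  obtain ⟨X, hX, hx⟩ := AntitoneOn.exists_tendsto_atTop (f := fun t => (γ t).1)
    (fun a ha b hb hab => (hanti ha hb hab).1) fun t ht => (hmem t ht).1.le
  obtain ⟨Y, hY, hy⟩ := AntitoneOn.exists_tendsto_atTop (f := fun t => (γ t).2)
    (fun a ha b hb hab => (hanti ha hb hab).2) fun t ht => (snd_pos_of_mem_region (hmem t ht)).le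
  have hlim : Tendsto γ atTop (𝓝 (X, Y)) := hx.prodMk_nhds hy
  have h₁ := eq_zero_of_hasDerivAt_of_tendsto (fun t ht => (hγ t ht).fst) hx
    ((continuous_F₁.tendsto _).comp hlim)
  have h₄ := eq_zero_of_hasDerivAt_of_tendsto (fun t ht => (hγ t ht).snd) hy
    ((continuous_F₄.tendsto _).comp hlim)
  obtain ⟨rfl, rfl⟩ := eq_two_zero_of_F₁_F₄_eq_zero hX hY h₁ h₄
  exact hlim

end Whitham

theorem stmt_8 (p₀ : ℝ × ℝ) (hp₀ : p₀ ∈ regionR₁) :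
    (∃ a₁ a₄ : ℝ → ℝ, a₁ 0 = p₀.1 ∧ a₄ 0 = p₀.2 ∧
      (∀ t : ℝ, 0 ≤ t → HasDerivAt a₁
        (2 * a₄ t * (8 - a₁ t ^ 2) - (4 - 3 * a₁ t ^ 2) * (1 - 1/4 * a₁ t ^ 2)) t) ∧
      (∀ t : ℝ, 0 ≤ t → HasDerivAt a₄
        (a₁ t * a₄ t * (3/2 * a₁ t ^ 2 - 6 - 8 * a₄ t)) t)) ∧
    (∀ a₁ a₄ : ℝ → ℝ, a₁ 0 = p₀.1 → a₄ 0 = p₀.2 →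
      (∀ t : ℝ, 0 ≤ t → HasDerivAt a₁
        (2 * a₄ t * (8 - a₁ t ^ 2) - (4 - 3 * a₁ t ^ 2) * (1 - 1/4 * a₁ t ^ 2)) t) →
      (∀ t : ℝ, 0 ≤ t → HasDerivAt a₄
        (a₁ t * a₄ t * (3/2 * a₁ t ^ 2 - 6 - 8 * a₄ t)) t) →
      (∀ t : ℝ, 0 ≤ t → (a₁ t, a₄ t) ∈ closure regionR₁) ∧
      Tendsto (fun t => (a₁ t, a₄ t)) atTop (nhds (2, 0))) := by
  rw [Whitham.regionR₁_eq_region] at hp₀ ⊢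
  refine ⟨?_, fun a₁ a₄ h₁ h₄ ha₁ ha₄ => ?_⟩
  · obtain ⟨γ, hγ0, hγ⟩ := Whitham.exists_forall_hasDerivAt_field hp₀
    exact ⟨fun t => (γ t).1, fun t => (γ t).2, by simp [hγ0], by simp [hγ0],
      fun t ht => (hγ t ht).fst, fun t ht => (hγ t ht).snd⟩
  · have hγ : ∀ t, 0 ≤ t → HasDerivAt (fun s => (a₁ s, a₄ s)) (Whitham.field (a₁ t, a₄ t)) t :=
      fun t ht => (ha₁ t ht).prodMk (ha₄ t ht)
    have hmem := Whitham.forall_mem_region hγ (by rw [h₁, h₄]; exact hp₀)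
    exact ⟨fun t ht => subset_closure (hmem t ht), Whitham.tendsto_two_zero hγ hmem⟩
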